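/- Under the stationary continuous-time Markov chain setting, let (h_n) be a sequence of positive reals with h_n → 0, n h_n → ∞ and n h_n² → 0, and set t_j = j h_n and T_n = n h_n. Then for every k ∈ S, the random variables √(n h_n) · ( (1/n) ∑_{j=1}^{n} 1_{{Z_{t_j} = k}} − (1/T_n) ∫_0^{T_n} 1_{{Z_s = k}} ds ) converge to 0 in probability as n → ∞. -/

import Mathlib

/-!
With `T = n h`, the quantity is `√T / T` times the right Riemann-sum error
`h ∑_{j ≤ n} X_{jh} - ∫_0^T X_s ds` of `X_t = 1{Z_t = k}`, and that error is the sum over the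
cells `[ih, (i+1)h]` of `∫ (X_{(i+1)h} - X_s) ds`. The Markov property gives
`E|X_t - X_s| ≤ max_i |P(t-s)_{ik} - δ_{ik}| = O(t - s)`, since `P(u) = exp(uQ)` is differentiable
at `u = 0` with `P(0) = 1`. Each cell therefore has `L¹` norm `O(h²)`, and the whole quantity has
`L¹` norm `O(√T / T · n h²) = O(√(n h² · h)) → 0`.
-/

open MeasureTheory Finset Filter

/-- The σ-algebra generated by `(Z_u : 0 ≤ u ≤ s)`. -/
def filtZ {Ω : Type*} {N : ℕ} (Z : ℝ → Ω → Fin N) (s : ℝ) : MeasurableSpace Ω :=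
  ⨆ u ∈ Set.Icc (0 : ℝ) s, MeasurableSpace.comap (Z u) ⊤

open Function Topology

section
attribute [local instance] Matrix.linftyOpNormedAddCommGroup

theorem Matrix.abs_apply_le_linfty_opNorm {m n : Type*} [Fintype m] [Fintype n]
    (A : Matrix m n ℝ) (i : m) (j : n) : |A i j| ≤ ‖A‖ := by
  rw [Matrix.linfty_opNorm_def]
  calc |A i j| ≤ ∑ j', ‖A i j'‖ :=
        single_le_sum (f := fun j' => ‖A i j'‖) (fun _ _ => norm_nonneg _) (mem_univ j)
    _ = ((∑ j', ‖A i j'‖₊ : NNReal) : ℝ) := by push_cast; rfl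
    _ ≤ _ := NNReal.coe_le_coe.2 (le_sup (f := fun i => ∑ j', ‖A i j'‖₊) (mem_univ i))

end

theorem Matrix.exists_abs_exp_smul_apply_sub_one_apply_le {m : Type*} [Fintype m]
    [DecidableEq m] (Q : Matrix m m ℝ) :
    ∃ C δ : ℝ, 0 < δ ∧ ∀ u, 0 ≤ u → u < δ → ∀ i j,
      |NormedSpace.exp (u • Q) i j - (1 : Matrix m m ℝ) i j| ≤ C * u := by
  let _ := Matrix.linftyOpNormedRing (n := m) (α := ℝ)
  let _ := Matrix.linftyOpNormedAlgebra (n := m) (R := ℝ) (α := ℝ)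
  obtain ⟨K, s, hs, hK⟩ :=
    (hasStrictDerivAt_exp_smul_const Q (0 : ℝ)).hasStrictFDerivAt.exists_lipschitzOnWith
  obtain ⟨δ, hδ, hball⟩ := Metric.mem_nhds_iff.1 hs
  refine ⟨K, δ, hδ, fun u hu huδ i j => ?_⟩
  have hu_mem : u ∈ s := hball (by simpa [abs_of_nonneg hu] using huδ)
  have hlip := hK.norm_sub_le hu_mem (mem_of_mem_nhds hs)
  rw [zero_smul, NormedSpace.exp_zero, sub_zero, Real.norm_eq_abs, abs_of_nonneg hu] at hlip
  have hentry := abs_apply_le_linfty_opNorm (NormedSpace.exp (u • Q) - 1) i j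
  rw [Matrix.sub_apply] at hentry
  exact hentry.trans hlip

theorem measurable_filtZ {Ω : Type*} {N : ℕ} {Z : ℝ → Ω → Fin N} {s : ℝ} (hs : 0 ≤ s) :
    Measurable[filtZ Z s] (Z s) :=
  Measurable.of_comap_le <|
    le_iSup₂ (f := fun u (_ : u ∈ Set.Icc (0 : ℝ) s) => MeasurableSpace.comap (Z u) ⊤) s
      ⟨hs, le_rfl⟩

theorem filtZ_le {Ω : Type*} [MeasurableSpace Ω] {N : ℕ} {Z : ℝ → Ω → Fin N}
    (hZ : ∀ t, Measurable (Z t)) (s : ℝ) : filtZ Z s ≤ ‹MeasurableSpace Ω› :=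
  iSup₂_le fun u _ => (hZ u).comap_le

theorem integrable_comp_of_finite {Ω α : Type*} [MeasurableSpace Ω] {μ : Measure Ω}
    [IsFiniteMeasure μ] [Finite α] [MeasurableSpace α] [MeasurableSingletonClass α]
    {X : Ω → α} (hX : Measurable X) (F : α → ℝ) : Integrable (fun ω => F (X ω)) μ :=
  Integrable.of_finite.comp_measurable hX

section Markov

variable {Ω : Type*} [MeasurableSpace Ω] {ℙ : Measure Ω} [IsProbabilityMeasure ℙ] {N : ℕ}
  {Q : Matrix (Fin N) (Fin N) ℝ} {Z : ℝ → Ω → Fin N}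

theorem integral_mul_indicator_eq_of_markov (hZ : ∀ t, Measurable (Z t))
    (hMarkov : ∀ s t : ℝ, 0 ≤ s → s ≤ t → ∀ k : Fin N,
      condExp (filtZ Z s) ℙ (fun ω => if Z t ω = k then (1 : ℝ) else 0)
        =ᵐ[ℙ] fun ω => NormedSpace.exp ((t - s) • Q) (Z s ω) k)
    {s t : ℝ} (hs : 0 ≤ s) (hst : s ≤ t) (k : Fin N) (φ : Fin N → ℝ) :
    ∫ ω, φ (Z s ω) * (if Z t ω = k then 1 else 0) ∂ℙ
      = ∫ ω, φ (Z s ω) * NormedSpace.exp ((t - s) • Q) (Z s ω) k ∂ℙ := by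
  have hφ : StronglyMeasurable[filtZ Z s] fun ω => φ (Z s ω) :=
    (Measurable.of_discrete.comp (measurable_filtZ hs)).stronglyMeasurable
  rw [← integral_condExp (filtZ_le hZ s)]
  refine integral_congr_ae ?_
  filter_upwards [condExp_mul_of_stronglyMeasurable_left hφ
      (integrable_comp_of_finite ((hZ s).prodMk (hZ t))
        fun p => φ p.1 * if p.2 = k then 1 else 0)
      (integrable_comp_of_finite (hZ t) fun i => if i = k then 1 else 0),
    hMarkov s t hs hst k] with ω hpull hP
  exact hpull.trans (by rw [Pi.mul_apply, hP])

theorem integral_abs_indicator_sub_le_of_markov (hZ : ∀ t, Measurable (Z t))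
    (hMarkov : ∀ s t : ℝ, 0 ≤ s → s ≤ t → ∀ k : Fin N,
      condExp (filtZ Z s) ℙ (fun ω => if Z t ω = k then (1 : ℝ) else 0)
        =ᵐ[ℙ] fun ω => NormedSpace.exp ((t - s) • Q) (Z s ω) k)
    {s t : ℝ} (hs : 0 ≤ s) (hst : s ≤ t) (k : Fin N) {c : ℝ}
    (hc : ∀ i, |NormedSpace.exp ((t - s) • Q) i k - (1 : Matrix (Fin N) (Fin N) ℝ) i k| ≤ c) :
    ∫ ω, |(if Z t ω = k then (1 : ℝ) else 0) - (if Z s ω = k then 1 else 0)| ∂ℙ ≤ c := by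
  set P := NormedSpace.exp ((t - s) • Q)
  -- Given `Z_s`, `|1{Z_t = k} - 1{Z_s = k}|` is affine in `1{Z_t = k}`, so the Markov property
  -- computes its mean.
  let ψ : Fin N → ℝ := fun i => if i = k then -1 else 1
  have hint (F : Fin N → ℝ) : Integrable (fun ω => F (Z s ω)) ℙ :=
    integrable_comp_of_finite (hZ s) F
  calc ∫ ω, |(if Z t ω = k then (1 : ℝ) else 0) - (if Z s ω = k then 1 else 0)| ∂ℙ
      = ∫ ω, (ψ (Z s ω) * (if Z t ω = k then 1 else 0) + (if Z s ω = k then 1 else 0)) ∂ℙ := by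
        congr 1 with ω
        by_cases hs : Z s ω = k <;> by_cases ht : Z t ω = k <;> simp [ψ, hs, ht]
    _ = ∫ ω, (ψ (Z s ω) * P (Z s ω) k + (if Z s ω = k then 1 else 0)) ∂ℙ := by
        rw [integral_add _ (hint fun i => if i = k then 1 else 0),
          integral_add (hint fun i => ψ i * P i k) (hint fun i => if i = k then 1 else 0),
          integral_mul_indicator_eq_of_markov hZ hMarkov hs hst]
        exact integrable_comp_of_finite ((hZ s).prodMk (hZ t))
          fun p => ψ p.1 * if p.2 = k then 1 else 0
    _ ≤ c := by
        have hbound (ω : Ω) :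
            ‖ψ (Z s ω) * P (Z s ω) k + (if Z s ω = k then 1 else 0)‖ ≤ c := by
          by_cases hs : Z s ω = k
          · simpa [ψ, hs, abs_sub_comm, neg_add_eq_sub] using hc k
          · simpa [ψ, hs, Matrix.one_apply_ne hs] using hc (Z s ω)
        simpa using (le_abs_self _).trans
          (norm_integral_le_of_norm_le_const (μ := ℙ) (Eventually.of_forall hbound))

end Markov

theorem tendstoInMeasure_zero_of_integral_abs_le {Ω ι : Type*} [MeasurableSpace Ω]
    {μ : Measure Ω} {l : Filter ι} {f : ι → Ω → ℝ} {b : ι → ℝ} (hf : ∀ i, Integrable (f i) μ)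
    (hfb : ∀ᶠ i in l, ∫ ω, |f i ω| ∂μ ≤ b i) (hb : Tendsto b l (𝓝 0)) :
    TendstoInMeasure μ f l fun _ => 0 := by
  refine tendstoInMeasure_of_tendsto_eLpNorm one_ne_zero (fun i => (hf i).aestronglyMeasurable)
    aestronglyMeasurable_const ?_
  have hb' : Tendsto (fun i => ENNReal.ofReal (b i)) l (𝓝 0) := by
    simpa using ENNReal.tendsto_ofReal hb
  refine tendsto_of_tendsto_of_tendsto_of_le_of_le' tendsto_const_nhds hb'
    (Eventually.of_forall fun _ => zero_le) ?_
  filter_upwards [hfb] with i hi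
  rw [show (f i - fun _ => 0) = f i from sub_zero (f i), eLpNorm_one_eq_lintegral_enorm,
    ← ofReal_integral_norm_eq_lintegral_enorm (hf i)]
  exact ENNReal.ofReal_le_ofReal hi

theorem tendsto_sqrt_mul_mul_of_tendsto {ι : Type*} {l : Filter ι} {x y : ι → ℝ}
    (hy : ∀ i, 0 ≤ y i) (hy0 : Tendsto y l (𝓝 0))
    (hxy : Tendsto (fun i => x i * y i ^ 2) l (𝓝 0)) :
    Tendsto (fun i => √(x i * y i) * y i) l (𝓝 0) := by
  have h (i : ι) : √(x i * y i) * y i = √(x i * y i ^ 2 * y i) := by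
    rw [show x i * y i ^ 2 * y i = x i * y i * y i ^ 2 by ring, Real.sqrt_mul' _ (sq_nonneg _),
      Real.sqrt_sq (hy i)]
  simpa [h] using (hxy.mul hy0).sqrt

noncomputable def riemannSumError (F : ℝ → ℝ) (h : ℝ) (n : ℕ) : ℝ :=
  h * ∑ j ∈ Icc 1 n, F (j * h) - ∫ s in 0..n * h, F s

theorem riemannSumError_eq_sum (F : ℝ → ℝ) (hF : ∀ a b, IntervalIntegrable F volume a b)
    (h : ℝ) (n : ℕ) :
    riemannSumError F h n
      = ∑ i ∈ range n, ∫ s in i * h..(i + 1) * h, (F ((i + 1) * h) - F s) := by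
  induction n with
  | zero => simp [riemannSumError]
  | succ n ih =>
    rw [sum_range_succ, ← ih, intervalIntegral.integral_sub intervalIntegrable_const (hF _ _),
      intervalIntegral.integral_const, riemannSumError, riemannSumError,
      sum_Icc_succ_top (by omega),
      ← intervalIntegral.integral_add_adjacent_intervals (hF _ _) (hF _ _)]
    push_cast
    simp only [smul_eq_mul]
    ring

theorem abs_sub_le_two_mul_of_abs_le {Ω : Type*} {X : ℝ → Ω → ℝ} {M : ℝ}
    (hXb : ∀ t ω, |X t ω| ≤ M) (b s : ℝ) (ω : Ω) : |X b ω - X s ω| ≤ 2 * M := by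
  linarith [abs_sub (X b ω) (X s ω), hXb b ω, hXb s ω]

theorem intervalIntegrable_of_abs_le {Ω : Type*} [MeasurableSpace Ω] {X : ℝ → Ω → ℝ} {M : ℝ}
    (hX : Measurable (uncurry X)) (hXb : ∀ t ω, |X t ω| ≤ M) (ω : Ω) (a b : ℝ) :
    IntervalIntegrable (X · ω) volume a b :=
  (intervalIntegrable_const (c := M)).mono_fun
    (hX.comp measurable_prodMk_right).aestronglyMeasurable
    (Eventually.of_forall fun s => (hXb s ω).trans (le_abs_self M))

section Discretization

variable {Ω : Type*} [MeasurableSpace Ω] {ℙ : Measure Ω} [IsFiniteMeasure ℙ]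
  {X : ℝ → Ω → ℝ} {M : ℝ}

theorem integrable_uncurry_restrict_uIoc (hX : Measurable (uncurry X))
    (hXb : ∀ t ω, |X t ω| ≤ M) (a b : ℝ) :
    Integrable (uncurry X) ((volume.restrict (Set.uIoc a b)).prod ℙ) :=
  have : IsFiniteMeasure (volume.restrict (Set.uIoc a b)) :=
    isFiniteMeasure_restrict.2 measure_Ioc_lt_top.ne
  Integrable.of_bound hX.aestronglyMeasurable M (Eventually.of_forall fun p => hXb p.1 p.2)

theorem integrable_intervalIntegral (hX : Measurable (uncurry X)) (hXb : ∀ t ω, |X t ω| ≤ M)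
    (a b : ℝ) : Integrable (fun ω => ∫ s in a..b, X s ω) ℙ := by
  simp_rw [intervalIntegral.intervalIntegral_eq_integral_uIoc]
  exact (integrable_uncurry_restrict_uIoc (ℙ := ℙ) hX hXb a b).integral_prod_right.smul
    (if a ≤ b then (1 : ℝ) else -1)

theorem measurable_uncurry_sub (hX : Measurable (uncurry X)) (b : ℝ) :
    Measurable (uncurry fun s ω => X b ω - X s ω) :=
  (hX.comp (measurable_const.prodMk measurable_snd)).sub hX

theorem integral_intervalIntegral_abs_sub_le (hX : Measurable (uncurry X))
    (hXb : ∀ t ω, |X t ω| ≤ M) {C δ : ℝ}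
    (hXlip : ∀ s t, 0 ≤ s → s ≤ t → t - s < δ → ∫ ω, |X t ω - X s ω| ∂ℙ ≤ C * (t - s))
    {a b : ℝ} (ha : 0 ≤ a) (hab : a ≤ b) (hbδ : b - a < δ) :
    ∫ ω, (∫ s in a..b, |X b ω - X s ω|) ∂ℙ ≤ C * (b - a) ^ 2 / 2 := by
  have hint := integrable_uncurry_restrict_uIoc (ℙ := ℙ) (X := fun s ω => |X b ω - X s ω|)
    (measurable_uncurry_sub hX b).abs
    (fun s ω => (abs_abs _).trans_le (abs_sub_le_two_mul_of_abs_le hXb b s ω)) a b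
  rw [← intervalIntegral_integral_swap hint]
  calc ∫ s in a..b, (∫ ω, |X b ω - X s ω| ∂ℙ) ≤ ∫ s in a..b, C * (b - s) := by
        refine intervalIntegral.integral_mono_on hab
          (intervalIntegrable_iff.2 hint.integral_prod_left)
          ((continuous_const.mul (continuous_sub_left b)).intervalIntegrable _ _) fun s hs => ?_
        exact hXlip s b (ha.trans hs.1) hs.2 (by linarith [hs.1])
    _ = C * (b - a) ^ 2 / 2 := by
        rw [intervalIntegral.integral_const_mul,
          intervalIntegral.integral_sub intervalIntegrable_const
            intervalIntegral.intervalIntegrable_id,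
          integral_id, intervalIntegral.integral_const, smul_eq_mul]
        ring

theorem integrable_riemannSumError (hX : Measurable (uncurry X)) (hXb : ∀ t ω, |X t ω| ≤ M)
    (h : ℝ) (n : ℕ) : Integrable (fun ω => riemannSumError (X · ω) h n) ℙ := by
  simp_rw [riemannSumError_eq_sum _ (intervalIntegrable_of_abs_le hX hXb _)]
  exact integrable_finsetSum _ fun i _ => integrable_intervalIntegral
    (measurable_uncurry_sub hX _) (abs_sub_le_two_mul_of_abs_le hXb _) _ _

theorem integral_abs_riemannSumError_le (hX : Measurable (uncurry X))
    (hXb : ∀ t ω, |X t ω| ≤ M) {C δ : ℝ}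
    (hXlip : ∀ s t, 0 ≤ s → s ≤ t → t - s < δ → ∫ ω, |X t ω - X s ω| ∂ℙ ≤ C * (t - s))
    {h : ℝ} (hh : 0 ≤ h) (hhδ : h < δ) (n : ℕ) :
    ∫ ω, |riemannSumError (X · ω) h n| ∂ℙ ≤ n * (C * h ^ 2 / 2) := by
  have hcell_le (i : ℕ) : (i : ℝ) * h ≤ (i + 1) * h := by nlinarith
  have hcell_int (i : ℕ) :
      Integrable (fun ω => ∫ s in i * h..(i + 1) * h, |X ((i + 1) * h) ω - X s ω|) ℙ :=
    integrable_intervalIntegral (X := fun s ω => |X ((i + 1) * h) ω - X s ω|)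
      (measurable_uncurry_sub hX _).abs
      (fun s ω => (abs_abs _).trans_le (abs_sub_le_two_mul_of_abs_le hXb _ s ω)) _ _
  calc ∫ ω, |riemannSumError (X · ω) h n| ∂ℙ
      ≤ ∫ ω, ∑ i ∈ range n, (∫ s in i * h..(i + 1) * h, |X ((i + 1) * h) ω - X s ω|) ∂ℙ := by
        refine integral_mono_of_nonneg (Eventually.of_forall fun ω => abs_nonneg _)
          (integrable_finsetSum _ fun i _ => hcell_int i) (Eventually.of_forall fun ω => ?_)
        dsimp only
        rw [riemannSumError_eq_sum _ (intervalIntegrable_of_abs_le hX hXb ω)]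
        exact (abs_sum_le_sum_abs _ _).trans (sum_le_sum fun i _ =>
          intervalIntegral.abs_integral_le_integral_abs (hcell_le i))
    _ = ∑ i ∈ range n, ∫ ω, (∫ s in i * h..(i + 1) * h, |X ((i + 1) * h) ω - X s ω|) ∂ℙ :=
        integral_finsetSum _ fun i _ => hcell_int i
    _ ≤ ∑ i ∈ range n, C * h ^ 2 / 2 := sum_le_sum fun i _ => by
        have hcell := integral_intervalIntegral_abs_sub_le hX hXb hXlip (by positivity)
          (hcell_le i) (by linarith)
        rwa [show ((i : ℝ) + 1) * h - i * h = h by ring] at hcell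
    _ = n * (C * h ^ 2 / 2) := by simp

theorem tendstoInMeasure_scaled_riemannSumError (hX : Measurable (uncurry X))
    (hXb : ∀ t ω, |X t ω| ≤ M) {C δ : ℝ} (hδ : 0 < δ)
    (hXlip : ∀ s t, 0 ≤ s → s ≤ t → t - s < δ → ∫ ω, |X t ω - X s ω| ∂ℙ ≤ C * (t - s))
    {h : ℕ → ℝ} (hhpos : ∀ n, 0 < h n) (hh0 : Tendsto h atTop (𝓝 0))
    (hnh2 : Tendsto (fun n : ℕ => (n : ℝ) * h n ^ 2) atTop (𝓝 0)) :
    TendstoInMeasure ℙ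
      (fun n ω => √(n * h n) / (n * h n) * riemannSumError (X · ω) (h n) n) atTop
      fun _ => 0 := by
  have hb : Tendsto (fun n : ℕ => C / 2 * (√(n * h n) * h n)) atTop (𝓝 0) := by
    simpa only [mul_zero] using
      (tendsto_sqrt_mul_mul_of_tendsto (fun n => (hhpos n).le) hh0 hnh2).const_mul (C / 2)
  refine tendstoInMeasure_zero_of_integral_abs_le
    (fun n => (integrable_riemannSumError hX hXb (h n) n).const_mul _) ?_ hb
  filter_upwards [eventually_gt_atTop 0, hh0.eventually (gt_mem_nhds hδ)] with n hn hhδ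
  have hT : 0 < (n : ℝ) * h n := mul_pos (Nat.cast_pos.2 hn) (hhpos n)
  calc ∫ ω, |√(n * h n) / (n * h n) * riemannSumError (X · ω) (h n) n| ∂ℙ
      = √(n * h n) / (n * h n) * ∫ ω, |riemannSumError (X · ω) (h n) n| ∂ℙ := by
        simp_rw [abs_mul, abs_of_nonneg (by positivity : 0 ≤ √(n * h n) / (n * h n))]
        exact integral_const_mul _ _
    _ ≤ √(n * h n) / (n * h n) * (n * (C * h n ^ 2 / 2)) := by
        gcongr
        exact integral_abs_riemannSumError_le hX hXb hXlip (hhpos n).le hhδ n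
    _ = C / 2 * (√(n * h n) * h n) := by
        field_simp

end Discretization

theorem stmt12_general {Ω : Type*} [MeasurableSpace Ω] (ℙ : Measure Ω) [IsProbabilityMeasure ℙ]
    (N : ℕ)
    (Q : Matrix (Fin N) (Fin N) ℝ)
    (Z : ℝ → Ω → Fin N)
    (hZmeas : Measurable fun p : ℝ × Ω => Z p.1 p.2)
    (hMarkov : ∀ s t : ℝ, 0 ≤ s → s ≤ t → ∀ k : Fin N,
      MeasureTheory.condExp (filtZ Z s) ℙ (fun ω => if Z t ω = k then (1 : ℝ) else 0)
        =ᵐ[ℙ] fun ω => NormedSpace.exp ((t - s) • Q) (Z s ω) k)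
    (h : ℕ → ℝ) (hhpos : ∀ n, 0 < h n)
    (hh0 : Tendsto h atTop (nhds 0))
    (hnh2 : Tendsto (fun n : ℕ => (n : ℝ) * h n ^ 2) atTop (nhds 0)) :
    -- `√(n h_n) ((1/n) ∑_{j=1}^n 1_{Z_{t_j}=k} − (1/T_n) ∫_0^{T_n} 1_{Z_s=k} ds) → 0`
    -- in probability, where `T_n = n h_n`.
    ∀ k : Fin N,
      TendstoInMeasure ℙ
        (fun (n : ℕ) (ω : Ω) =>
          Real.sqrt ((n : ℝ) * h n) *
            ((1 / (n : ℝ)) *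
                ∑ j ∈ Finset.Icc 1 n, (if Z ((j : ℝ) * h n) ω = k then (1 : ℝ) else 0) -
              (1 / ((n : ℝ) * h n)) *
                ∫ s in (0 : ℝ)..((n : ℝ) * h n), (if Z s ω = k then (1 : ℝ) else 0)))
        atTop (fun _ => (0 : ℝ)) := by
  intro k
  obtain ⟨C, δ, hδ, hC⟩ := Matrix.exists_abs_exp_smul_apply_sub_one_apply_le Q
  set X : ℝ → Ω → ℝ := fun t ω => if Z t ω = k then 1 else 0
  have hX : Measurable (uncurry X) :=
    (Measurable.of_discrete (f := fun i : Fin N => if i = k then (1 : ℝ) else 0)).comp hZmeas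
  have hXb (t : ℝ) (ω : Ω) : |X t ω| ≤ 1 := by unfold X; split_ifs <;> simp
  have hXlip (s t : ℝ) (hs : 0 ≤ s) (hst : s ≤ t) (htδ : t - s < δ) :
      ∫ ω, |X t ω - X s ω| ∂ℙ ≤ C * (t - s) :=
    integral_abs_indicator_sub_le_of_markov (fun t => hZmeas.comp measurable_prodMk_left) hMarkov
      hs hst k fun i => hC _ (sub_nonneg.2 hst) htδ i k
  refine (tendstoInMeasure_scaled_riemannSumError hX hXb hδ hXlip hhpos hh0 hnh2).congr_left
    fun n => Eventually.of_forall fun ω => ?_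
  have := (hhpos n).ne'
  simp only [riemannSumError, X]
  field_simp

theorem stmt12 {Ω : Type*} [MeasurableSpace Ω] (ℙ : Measure Ω) [IsProbabilityMeasure ℙ]
    (N : ℕ) (hN : 2 ≤ N)
    (Q : Matrix (Fin N) (Fin N) ℝ)
    (hQoff : ∀ i j : Fin N, i ≠ j → 0 < Q i j)
    (hQdiag : ∀ i : Fin N, Q i i = -∑ j ∈ Finset.univ.erase i, Q i j)
    (π : Fin N → ℝ)
    (hπnn : ∀ i, 0 ≤ π i) (hπsum : ∑ i, π i = 1)
    (hπQ : ∀ j, ∑ i, π i * Q i j = 0)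
    (hπuniq : ∀ π' : Fin N → ℝ, (∀ i, 0 ≤ π' i) → (∑ i, π' i = 1) →
      (∀ j, ∑ i, π' i * Q i j = 0) → π' = π)
    (Z : ℝ → Ω → Fin N)
    (hZmeas : Measurable fun p : ℝ × Ω => Z p.1 p.2)
    (hZ0 : ∀ i, ℙ {ω | Z 0 ω = i} = ENNReal.ofReal (π i))
    (hMarkov : ∀ s t : ℝ, 0 ≤ s → s ≤ t → ∀ k : Fin N,
      MeasureTheory.condExp (filtZ Z s) ℙ (fun ω => if Z t ω = k then (1 : ℝ) else 0)
        =ᵐ[ℙ] fun ω => NormedSpace.exp ((t - s) • Q) (Z s ω) k)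
    (h : ℕ → ℝ) (hhpos : ∀ n, 0 < h n)
    (hh0 : Tendsto h atTop (nhds 0))
    (hnh : Tendsto (fun n : ℕ => (n : ℝ) * h n) atTop atTop)
    (hnh2 : Tendsto (fun n : ℕ => (n : ℝ) * h n ^ 2) atTop (nhds 0)) :
    -- `√(n h_n) ((1/n) ∑_{j=1}^n 1_{Z_{t_j}=k} − (1/T_n) ∫_0^{T_n} 1_{Z_s=k} ds) → 0`
    -- in probability, where `T_n = n h_n`.
    ∀ k : Fin N,
      TendstoInMeasure ℙ
        (fun (n : ℕ) (ω : Ω) =>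
          Real.sqrt ((n : ℝ) * h n) *
            ((1 / (n : ℝ)) *
                ∑ j ∈ Finset.Icc 1 n, (if Z ((j : ℝ) * h n) ω = k then (1 : ℝ) else 0) -
              (1 / ((n : ℝ) * h n)) *
                ∫ s in (0 : ℝ)..((n : ℝ) * h n), (if Z s ω = k then (1 : ℝ) else 0)))
        atTop (fun _ => (0 : ℝ)) :=
  stmt12_general ℙ N Q Z hZmeas hMarkov h hhpos hh0 hnh2
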